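/- (Semi-metric geometry with vanishing rotational disclinations.) Let Ω be in addition connected and simply connected, let L be a connection on Ω and g a metric on Ω with lowered curvature R, and suppose the non-metricity has the semi-metric form Q_{kij} = Q_k g_{ij} for a smooth covector field Q_k : Ω → ℝ³. Assume the skew part of R in its last two indices vanishes identically: R_{ijkl} = R_{ijlk} on Ω (i.e. θ = 0). Then the symmetric part of R in its last two indices vanishes identically (R_{ijkl} + R_{ijlk} ≡ 0, i.e. ζ = 0) if and only if there exists a smooth function φ : Ω → ℝ such that Q_k = ∂_k φ on Ω. -/

import Mathlib

noncomputable section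

/-- Points of ℝ³. -/
abbrev E3 := Fin 3 → ℝ

/-- Partial derivative of `f` along the `j`-th coordinate at `x`. -/
def pd (f : E3 → ℝ) (j : Fin 3) (x : E3) : ℝ :=
  fderiv ℝ f x (Pi.single j 1)

/-- A connection coefficient field: `L x i j k = L^i_{jk}(x)`. -/
abbrev Conn := E3 → Fin 3 → Fin 3 → Fin 3 → ℝ

/-- Smoothness of a connection on `Ω`. -/
def ConnSmooth (L : Conn) (Ω : Set E3) : Prop :=
  ∀ i j k, ContDiffOn ℝ (⊤ : ℕ∞) (fun x => L x i j k) Ω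

/-- Torsion of a connection: `torsion L x i j k = T_{jk}^i = (1/2)(L^i_{jk} - L^i_{kj})`. -/
def torsion (L : Conn) (x : E3) (i j k : Fin 3) : ℝ :=
  (L x i j k - L x i k j) / 2

/-- Curvature of a connection: `curv L x p j i q = R_{jiq}^p`. -/
def curv (L : Conn) (x : E3) (p j i q : Fin 3) : ℝ :=
  pd (fun y => L y p i q) j x - pd (fun y => L y p j q) i x
    + ∑ h, (L x h i q * L x p j h - L x h j q * L x p i h)

/-- A metric field. -/
abbrev Metric := E3 → Matrix (Fin 3) (Fin 3) ℝ

/-- `g` is a metric on `Ω`: smooth entries, symmetric and positive definite on `Ω`. -/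
def MetricOn (g : Metric) (Ω : Set E3) : Prop :=
  (∀ i j, ContDiffOn ℝ (⊤ : ℕ∞) (fun x => g x i j) Ω) ∧
  (∀ x ∈ Ω, (g x).IsSymm) ∧ (∀ x ∈ Ω, (g x).PosDef)

/-- Non-metricity of `(L, g)`: `nm L g x k i j = Q_{kij}`. -/
def nm (L : Conn) (g : Metric) (x : E3) (k i j : Fin 3) : ℝ :=
  - pd (fun y => g y i j) k x + ∑ p, (L x p k j * g x i p + L x p k i * g x j p)

/-- Lowered curvature: `lcurv L g x i j k l = R_{ijkl} = g_{lp} R_{ijk}^p`. -/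
def lcurv (L : Conn) (g : Metric) (x : E3) (i j k l : Fin 3) : ℝ :=
  ∑ p, g x l p * curv L x p i j k

/-!
Differentiating the semi-metric condition `Q_{kij} = Q_k g_{ij}` and antisymmetrising in the
derivative index gives `R_{ijkl} + R_{ijlk} = (∂_i Q_j - ∂_j Q_i) g_{kl}`; since `g_{00} > 0`,
`ζ = 0` says exactly that the covector `Q` is closed. On a simply connected open set a closed
1-form is exact: by the Poincaré lemma on balls, its local primitives form a sheaf whose étalé
space is a covering of `Ω`, so the identity of `Ω` lifts to a continuous section, and evaluating
its germs gives a global primitive.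
-/

open Set Filter Topology Metric

theorem IsOpen.eqOn_of_hasFDerivAt {E : Type*} [NormedAddCommGroup E] [NormedSpace ℝ E]
    {ω : E → E →L[ℝ] ℝ} {s : Set E} {φ ψ : E → ℝ} {x : E} (hs : IsOpen s)
    (hs' : IsPreconnected s) (hφ : ∀ y ∈ s, HasFDerivAt φ (ω y) y)
    (hψ : ∀ y ∈ s, HasFDerivAt ψ (ω y) y) (hx : x ∈ s) (hφψ : φ x = ψ x) : s.EqOn φ ψ :=
  hs.eqOn_of_fderiv_eq hs' (fun y hy => (hφ y hy).differentiableAt.differentiableWithinAt)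
    (fun y hy => (hψ y hy).differentiableAt.differentiableWithinAt)
    (fun y hy => (hφ y hy).fderiv.trans (hψ y hy).fderiv.symm) hx hφψ

namespace TopologicalSpace.Opens

open TopCat CategoryTheory

theorem isOpen_image_val {X : Type*} [TopologicalSpace X] {Ω : Opens X}
    (U : Opens (TopCat.of Ω)) : IsOpen ((↑) '' (U : Set Ω) : Set X) :=
  Ω.isOpen.isOpenMap_subtype_val _ U.isOpen

-- `E : Type` because `stalkToFiber` needs the fibre `ℝ` in the universe of the base space.
variable {E : Type} [NormedAddCommGroup E] [NormedSpace ℝ E] {ω : E → E →L[ℝ] ℝ}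

variable (ω) in
def primitiveLocalPredicate (Ω : Opens E) : LocalPredicate (fun _ : TopCat.of Ω => ℝ) where
  pred {U} f := ∃ φ : E → ℝ, ∀ x : U, HasFDerivAt φ (ω x) x ∧ f x = φ x
  res i f := fun ⟨φ, hφ⟩ => ⟨φ, fun x => hφ ⟨x, i.le x.2⟩⟩
  locality {U} f hf := by
    classical
    refine ⟨fun z => if h : ∃ hz : z ∈ Ω, ⟨z, hz⟩ ∈ U then f ⟨_, h.2⟩ else 0, fun x => ⟨?_, ?_⟩⟩
    · obtain ⟨V, hxV, i, φ, hφ⟩ := hf x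
      refine (hφ ⟨x, hxV⟩).1.congr_of_eventuallyEq ?_
      filter_upwards [(isOpen_image_val V).mem_nhds ⟨x, hxV, rfl⟩]
      rintro _ ⟨z, hzV, rfl⟩
      simp only [dif_pos (⟨z.2, i.le hzV⟩ : ∃ hz : (z : E) ∈ Ω, ⟨(z : E), hz⟩ ∈ U)]
      exact (hφ ⟨z, hzV⟩).2
    · simp only [dif_pos (⟨x.1.2, x.2⟩ : ∃ hz : (x : E) ∈ Ω, ⟨(x : E), hz⟩ ∈ U)]

variable (ω) in
abbrev primitiveSheaf (Ω : Opens E) : Sheaf (Type _) (TopCat.of Ω) :=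
  subsheafToTypes (primitiveLocalPredicate ω Ω)

variable {Ω : Opens E}

theorem bijective_germ_primitiveSheaf {U : Opens (TopCat.of Ω)}
    (hU : IsPreconnected ((↑) '' (U : Set Ω) : Set E)) {φ₀ : E → ℝ}
    (hφ₀ : ∀ x : U, HasFDerivAt φ₀ (ω x) x) (y : TopCat.of Ω) (hy : y ∈ U) :
    Function.Bijective ((primitiveSheaf ω Ω).presheaf.germ U y hy) := by
  set F := (primitiveSheaf ω Ω).presheaf
  have hmem {S : Opens (TopCat.of Ω)} {z : Ω} (h : (z : E) ∈ (↑) '' (S : Set Ω)) : z ∈ S :=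
    Subtype.val_injective.mem_set_image.mp h
  constructor
  · rintro ⟨f, φ, hφ⟩ ⟨g, ψ, hψ⟩ hfg
    obtain ⟨W, hyW, iU, iV, h⟩ := F.germ_eq y hy hy _ _ hfg
    have hfgy : f ⟨y, hy⟩ = g ⟨y, hy⟩ := congr_arg (fun s => s.1 ⟨y, hyW⟩) h
    have hφψ : EqOn φ ψ ((↑) '' (U : Set Ω)) :=
      (isOpen_image_val U).eqOn_of_hasFDerivAt hU
        (by rintro _ ⟨z, hz, rfl⟩; exact (hφ ⟨z, hz⟩).1)
        (by rintro _ ⟨z, hz, rfl⟩; exact (hψ ⟨z, hz⟩).1) ⟨y, hy, rfl⟩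
        ((hφ ⟨y, hy⟩).2.symm.trans (hfgy.trans (hψ ⟨y, hy⟩).2))
    exact Subtype.ext <| funext fun z =>
      (hφ z).2.trans ((hφψ ⟨z, z.2, rfl⟩).trans (hψ z).2.symm)
  · intro γ
    obtain ⟨V, hyV, ⟨f, ψ, hψ⟩, hγ⟩ := F.exists_germ_eq γ
    obtain ⟨ε, hε, hεUV⟩ := Metric.isOpen_iff.mp
      ((isOpen_image_val U).inter (isOpen_image_val V)) y ⟨⟨y, hy, rfl⟩, ⟨y, hyV, rfl⟩⟩
    let W : Opens (TopCat.of Ω) :=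
      ⟨(↑) ⁻¹' ball (y : E) ε, isOpen_ball.preimage continuous_subtype_val⟩
    have hWU : W ≤ U := fun z hz => hmem (hεUV hz).1
    have hWV : W ≤ V := fun z hz => hmem (hεUV hz).2
    set c := ψ y - φ₀ y
    have hball : EqOn (fun z => φ₀ z + c) ψ (ball (y : E) ε) := by
      refine isOpen_ball.eqOn_of_hasFDerivAt (ω := ω) (convex_ball _ _).isPreconnected ?_ ?_
        (mem_ball_self hε) (by simp [c])
      · intro e he
        obtain ⟨v, hv, rfl⟩ := (hεUV he).1
        exact (hφ₀ ⟨v, hv⟩).add_const c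
      · intro e he
        obtain ⟨v, hv, rfl⟩ := (hεUV he).2
        exact (hψ ⟨v, hv⟩).1
    refine ⟨⟨fun z => φ₀ z + c, fun z => φ₀ z + c, fun z => ⟨(hφ₀ z).add_const c, rfl⟩⟩, ?_⟩
    rw [← hγ]
    exact F.germ_ext W (mem_ball_self hε) (homOfLE hWU) (homOfLE hWV) <| Subtype.ext <|
      funext fun z => (hball z.2).trans (hψ ⟨z, hWV z.2⟩).2.symm

theorem isCoveringMap_base_primitiveSheaf
    (hloc : ∀ x ∈ Ω, ∃ U ∈ 𝓝 x, ∃ φ : E → ℝ, ∀ y ∈ U, HasFDerivAt φ (ω y) y) :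
    IsCoveringMap (Presheaf.EtaleSpace.base (F := (primitiveSheaf ω Ω).presheaf)) := by
  refine Presheaf.EtaleSpace.isCoveringMap_base fun x => ?_
  obtain ⟨U, hU, φ, hφ⟩ := hloc x x.2
  obtain ⟨r, hr, hrU⟩ := Metric.mem_nhds_iff.mp (inter_mem hU (Ω.isOpen.mem_nhds x.2))
  refine ⟨⟨(↑) ⁻¹' ball (x : E) r, isOpen_ball.preimage continuous_subtype_val⟩, mem_ball_self hr,
    bijective_germ_primitiveSheaf ?_ fun y => hφ y (hrU y.2).1⟩
  change _root_.IsPreconnected (((↑) : Ω → E) '' ((↑) ⁻¹' ball (x : E) r))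
  rw [image_preimage_eq_of_subset fun y hy => ⟨⟨y, (hrU hy).2⟩, rfl⟩]
  exact (convex_ball _ _).isPreconnected

theorem hasFDerivAt_of_continuous_section
    (F : C(TopCat.of Ω, Presheaf.EtaleSpace (primitiveSheaf ω Ω).presheaf))
    (hF : ∀ a, (F a).base = a) {Φ : E → ℝ}
    (hΦ : ∀ a : Ω, Φ a = stalkToFiber (primitiveLocalPredicate ω Ω) (F a).base (F a).germ)
    {x : E} (hx : x ∈ Ω) : HasFDerivAt Φ (ω x) x := by
  obtain ⟨U, hxU, ⟨f, φ, hφ⟩, hFU⟩ :=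
    Presheaf.EtaleSpace.exists_section_of_tendsto (F.continuous.tendsto ⟨x, hx⟩)
  refine (hφ ⟨⟨x, hx⟩, hF ⟨x, hx⟩ ▸ hxU⟩).1.congr_of_eventuallyEq ?_
  rw [← map_nhds_subtype_coe_eq_nhds hx (Ω.isOpen.mem_nhds hx), EventuallyEq, eventually_map]
  filter_upwards [hFU] with a ⟨ha, hFa⟩
  rw [hΦ, hFa]
  exact (stalkToFiber_germ _ U _ ha _).trans
    ((hφ ⟨_, ha⟩).2.trans (congr_arg (fun b : Ω => φ b) (hF a)))

theorem exists_forall_hasFDerivAt_of_locally_exists [SimplyConnectedSpace Ω]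
    (hloc : ∀ x ∈ Ω, ∃ U ∈ 𝓝 x, ∃ φ : E → ℝ, ∀ y ∈ U, HasFDerivAt φ (ω y) y) :
    ∃ Φ : E → ℝ, ∀ x ∈ Ω, HasFDerivAt Φ (ω x) x := by
  classical
  obtain ⟨a₀⟩ : Nonempty Ω := inferInstance
  obtain ⟨U₀, hU₀, φ₀, hφ₀⟩ := hloc a₀ a₀.2
  let V₀ : Opens (TopCat.of Ω) :=
    ⟨(↑) ⁻¹' interior U₀, isOpen_interior.preimage continuous_subtype_val⟩
  have ha₀ : a₀ ∈ V₀ := mem_interior_iff_mem_nhds.mpr hU₀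
  let e₀ : Presheaf.EtaleSpace (primitiveSheaf ω Ω).presheaf :=
    ⟨a₀, (primitiveSheaf ω Ω).presheaf.germ V₀ a₀ ha₀
      ⟨fun z => φ₀ z, φ₀, fun z => ⟨hφ₀ z (interior_subset z.2), rfl⟩⟩⟩
  have : LocallyPathConnectedSpace (TopCat.of Ω) := Ω.isOpen.locallyPathConnectedSpace
  have : SimplyConnectedSpace (TopCat.of Ω) := ‹SimplyConnectedSpace Ω›
  obtain ⟨F, ⟨-, hF⟩, -⟩ :=
    (isCoveringMap_base_primitiveSheaf hloc).existsUnique_continuousMap_lifts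
      (ContinuousMap.id (TopCat.of Ω)) a₀ e₀ rfl
  exact ⟨fun y => if hy : y ∈ Ω then
      stalkToFiber (primitiveLocalPredicate ω Ω) (F ⟨y, hy⟩).base (F ⟨y, hy⟩).germ else 0,
    fun x => hasFDerivAt_of_continuous_section F (congr_fun hF) fun a => dif_pos a.2⟩

theorem exists_forall_hasFDerivAt_of_fderiv_symmetric [SimplyConnectedSpace Ω]
    (hω : DifferentiableOn ℝ ω Ω) (hdω : ∀ a ∈ Ω, ∀ x y, fderiv ℝ ω a x y = fderiv ℝ ω a y x) :
    ∃ Φ : E → ℝ, ∀ x ∈ Ω, HasFDerivAt Φ (ω x) x := by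
  refine exists_forall_hasFDerivAt_of_locally_exists fun x hx => ?_
  obtain ⟨r, hr, hrΩ⟩ := Metric.isOpen_iff.mp Ω.isOpen x hx
  obtain ⟨φ, hφ⟩ := (convex_ball x r).exists_forall_hasFDerivAt_of_fderiv_symmetric isOpen_ball
    (hω.mono hrΩ) fun a ha => hdω a (hrΩ ha)
  exact ⟨ball x r, ball_mem_nhds x hr, φ, hφ⟩

end TopologicalSpace.Opens

section PartialDerivative

variable {Ω : Set E3} {f g : E3 → ℝ} {x : E3}

theorem pd_congr (hΩ : IsOpen Ω) (h : EqOn f g Ω) (hx : x ∈ Ω) (j : Fin 3) :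
    pd f j x = pd g j x := by
  rw [pd, pd, (eventuallyEq_of_mem (hΩ.mem_nhds hx) h).fderiv_eq]

theorem pd_add (hf : DifferentiableAt ℝ f x) (hg : DifferentiableAt ℝ g x) (j : Fin 3) :
    pd (fun y => f y + g y) j x = pd f j x + pd g j x := by
  simp [pd, fderiv_fun_add hf hg]

theorem pd_neg (j : Fin 3) : pd (fun y => -f y) j x = -pd f j x := by
  simp [pd, fderiv_fun_neg]

theorem pd_mul (hf : DifferentiableAt ℝ f x) (hg : DifferentiableAt ℝ g x) (j : Fin 3) :
    pd (fun y => f y * g y) j x = pd f j x * g x + f x * pd g j x := by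
  simp [pd, fderiv_fun_mul hf hg]
  ring

theorem pd_sum {F : Fin 3 → E3 → ℝ} (hF : ∀ p, DifferentiableAt ℝ (F p) x) (j : Fin 3) :
    pd (fun y => ∑ p, F p y) j x = ∑ p, pd (F p) j x := by
  simp [pd, fderiv_fun_sum fun p _ => hF p]

theorem fderiv_apply_eq_sum_pd (f : E3 → ℝ) (x v : E3) :
    fderiv ℝ f x v = ∑ i, v i * pd f i x := by
  rw [← ContinuousLinearMap.coe_coe, LinearMap.pi_apply_eq_sum_univ]
  refine Finset.sum_congr rfl fun i _ => ?_
  have hbasis : (fun j => if i = j then (1 : ℝ) else 0) = Pi.single i 1 := by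
    ext j
    simp [Pi.single_apply, eq_comm]
  rw [hbasis, pd, smul_eq_mul, ContinuousLinearMap.coe_coe]

theorem ContDiffOn.pd (hΩ : IsOpen Ω) (hf : ContDiffOn ℝ (⊤ : ℕ∞) f Ω) (j : Fin 3) :
    ContDiffOn ℝ (⊤ : ℕ∞) (pd f j) Ω :=
  (ContinuousLinearMap.apply ℝ ℝ (Pi.single j 1)).contDiff.comp_contDiffOn
    (hf.fderiv_of_isOpen hΩ le_rfl)

theorem ContDiffOn.differentiableAt_of_isOpen (hΩ : IsOpen Ω) (hf : ContDiffOn ℝ (⊤ : ℕ∞) f Ω)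
    (hx : x ∈ Ω) : DifferentiableAt ℝ f x :=
  (hf.contDiffAt (hΩ.mem_nhds hx)).differentiableAt (by simp)

theorem pd_comm (hΩ : IsOpen Ω) (hf : ContDiffOn ℝ (⊤ : ℕ∞) f Ω) (hx : x ∈ Ω) (i j : Fin 3) :
    pd (pd f i) j x = pd (pd f j) i x := by
  have hf' : DifferentiableAt ℝ (fderiv ℝ f) x :=
    ((hf.fderiv_of_isOpen (m := 1) hΩ (WithTop.coe_le_coe.mpr le_top)).contDiffAt
      (hΩ.mem_nhds hx)).differentiableAt (by simp)
  have hsymm := (hf.contDiffAt (hΩ.mem_nhds hx)).isSymmSndFDerivAt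
    (by simp only [minSmoothness_of_isRCLikeNormedField]; exact WithTop.coe_le_coe.mpr le_top)
  change fderiv ℝ (fun y => fderiv ℝ f y (Pi.single i 1)) x (Pi.single j 1)
    = fderiv ℝ (fun y => fderiv ℝ f y (Pi.single j 1)) x (Pi.single i 1)
  rw [fderiv_clm_apply hf' (differentiableAt_const _),
    fderiv_clm_apply hf' (differentiableAt_const _)]
  simpa using hsymm _ _

end PartialDerivative

section NonMetricity

variable {L : Conn} {g : Metric} {Ω : Set E3} {x : E3}

theorem pd_nm (hΩ : IsOpen Ω) (hL : ConnSmooth L Ω)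
    (hg : ∀ i j, ContDiffOn ℝ (⊤ : ℕ∞) (fun x => g x i j) Ω) (hx : x ∈ Ω) (i j k l : Fin 3) :
    pd (fun y => nm L g y i k l) j x
      = -pd (pd (fun y => g y k l) i) j x
        + ∑ p, (pd (fun y => L y p i l) j x * g x k p + L x p i l * pd (fun y => g y k p) j x
          + (pd (fun y => L y p i k) j x * g x l p + L x p i k * pd (fun y => g y l p) j x)) := by
  have hd {f : E3 → ℝ} (hf : ContDiffOn ℝ (⊤ : ℕ∞) f Ω) : DifferentiableAt ℝ f x :=
    hf.differentiableAt_of_isOpen hΩ hx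
  have hLg (p a b c d : Fin 3) : DifferentiableAt ℝ (fun y => L y p a b * g y c d) x :=
    (hd (hL p a b)).fun_mul (hd (hg c d))
  have hterm (p : Fin 3) :
      DifferentiableAt ℝ (fun y => L y p i l * g y k p + L y p i k * g y l p) x :=
    (hLg p i l k p).fun_add (hLg p i k l p)
  simp only [nm]
  rw [pd_add (hd ((hg k l).pd hΩ i)).fun_neg (.fun_sum fun p _ => hterm p), pd_neg, pd_sum hterm]
  congr 1
  refine Finset.sum_congr rfl fun p _ => ?_
  rw [pd_add (hLg p i l k p) (hLg p i k l p), pd_mul (hd (hL p i l)) (hd (hg k p)),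
    pd_mul (hd (hL p i k)) (hd (hg l p))]

theorem lcurv_add_lcurv_swap (hΩ : IsOpen Ω) (hL : ConnSmooth L Ω)
    (hg : ∀ i j, ContDiffOn ℝ (⊤ : ℕ∞) (fun x => g x i j) Ω) (hx : x ∈ Ω)
    (hsymm : (g x).IsSymm) (i j k l : Fin 3) :
    lcurv L g x i j k l + lcurv L g x i j l k
      = pd (fun y => nm L g y j k l) i x - pd (fun y => nm L g y i k l) j x
        - ∑ p, (L x p i l * nm L g x j k p - L x p j l * nm L g x i k p
          + L x p i k * nm L g x j l p - L x p j k * nm L g x i l p) := by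
  have hs10 : g x 1 0 = g x 0 1 := hsymm.apply 0 1
  have hs20 : g x 2 0 = g x 0 2 := hsymm.apply 0 2
  have hs21 : g x 2 1 = g x 1 2 := hsymm.apply 1 2
  rw [pd_nm hΩ hL hg hx i j k l, pd_nm hΩ hL hg hx j i k l]
  simp only [lcurv, curv, nm, Fin.sum_univ_three, hs10, hs20, hs21]
  linear_combination -pd_comm hΩ (hg k l) hx i j

theorem lcurv_add_lcurv_swap_of_semiMetric (hΩ : IsOpen Ω) (hL : ConnSmooth L Ω)
    (hg : ∀ i j, ContDiffOn ℝ (⊤ : ℕ∞) (fun x => g x i j) Ω) {Qv : E3 → Fin 3 → ℝ}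
    (hQv : ∀ k, ContDiffOn ℝ (⊤ : ℕ∞) (fun x => Qv x k) Ω)
    (hsemi : ∀ x ∈ Ω, ∀ k i j : Fin 3, nm L g x k i j = Qv x k * g x i j) (hx : x ∈ Ω)
    (hsymm : (g x).IsSymm) (i j k l : Fin 3) :
    lcurv L g x i j k l + lcurv L g x i j l k
      = (pd (fun y => Qv y j) i x - pd (fun y => Qv y i) j x) * g x k l := by
  have hi := hsemi x hx i k l
  have hj := hsemi x hx j k l
  have hgkl := (hg k l).differentiableAt_of_isOpen hΩ hx
  rw [lcurv_add_lcurv_swap hΩ hL hg hx hsymm, pd_congr hΩ (fun y hy => hsemi y hy j k l) hx,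
    pd_congr hΩ (fun y hy => hsemi y hy i k l) hx,
    pd_mul ((hQv j).differentiableAt_of_isOpen hΩ hx) hgkl,
    pd_mul ((hQv i).differentiableAt_of_isOpen hΩ hx) hgkl]
  simp only [hsemi x hx]
  simp only [nm, Fin.sum_univ_three] at hi hj ⊢
  linear_combination (-Qv x j) * hi + Qv x i * hj

end NonMetricity

section CovectorField

variable {Ω : Set E3} {Qv : E3 → Fin 3 → ℝ}

def covectorForm (Qv : E3 → Fin 3 → ℝ) (x : E3) : E3 →L[ℝ] ℝ :=
  ∑ k, Qv x k • ContinuousLinearMap.proj k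

theorem covectorForm_apply (x v : E3) : covectorForm Qv x v = ∑ k, Qv x k * v k := by
  simp [covectorForm]

theorem contDiffOn_covectorForm (hQv : ∀ k, ContDiffOn ℝ (⊤ : ℕ∞) (fun x => Qv x k) Ω) :
    ContDiffOn ℝ (⊤ : ℕ∞) (covectorForm Qv) Ω :=
  .sum fun k _ => (hQv k).smul contDiffOn_const

theorem fderiv_covectorForm_apply (hΩ : IsOpen Ω)
    (hQv : ∀ k, ContDiffOn ℝ (⊤ : ℕ∞) (fun x => Qv x k) Ω) {x : E3} (hx : x ∈ Ω) (v w : E3) :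
    fderiv ℝ (covectorForm Qv) x v w = ∑ k, ∑ i, v i * pd (fun y => Qv y k) i x * w k := by
  have hω : HasFDerivAt (covectorForm Qv)
      (∑ k, (fderiv ℝ (fun y => Qv y k) x).smulRight (ContinuousLinearMap.proj k)) x :=
    .fun_sum fun k _ => ((hQv k).differentiableAt_of_isOpen hΩ hx).hasFDerivAt.smul_const
      (ContinuousLinearMap.proj k : E3 →L[ℝ] ℝ)
  simp [hω.fderiv, fderiv_apply_eq_sum_pd, Finset.sum_mul]

theorem exists_pd_eq_iff_pd_comm (hΩ : IsOpen Ω) [SimplyConnectedSpace Ω]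
    (hQv : ∀ k, ContDiffOn ℝ (⊤ : ℕ∞) (fun x => Qv x k) Ω) :
    (∃ φ : E3 → ℝ, ContDiffOn ℝ (⊤ : ℕ∞) φ Ω ∧ ∀ x ∈ Ω, ∀ k : Fin 3, Qv x k = pd φ k x)
      ↔ ∀ x ∈ Ω, ∀ i j : Fin 3, pd (fun y => Qv y j) i x = pd (fun y => Qv y i) j x := by
  constructor
  · rintro ⟨φ, hφ, hQφ⟩ x hx i j
    rw [pd_congr hΩ (fun y hy => hQφ y hy j) hx, pd_congr hΩ (fun y hy => hQφ y hy i) hx,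
      pd_comm hΩ hφ hx]
  · intro hclosed
    have hsymm (a : E3) (ha : a ∈ Ω) (v w : E3) :
        fderiv ℝ (covectorForm Qv) a v w = fderiv ℝ (covectorForm Qv) a w v := by
      simp only [fderiv_covectorForm_apply hΩ hQv ha, Fin.sum_univ_three, hclosed a ha 0 1,
        hclosed a ha 0 2, hclosed a ha 1 2]
      ring
    have hω := contDiffOn_covectorForm hQv
    obtain ⟨Φ, hΦ⟩ := TopologicalSpace.Opens.exists_forall_hasFDerivAt_of_fderiv_symmetric
      (Ω := ⟨Ω, hΩ⟩) (hω.differentiableOn (by simp)) hsymm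
    refine ⟨Φ, (contDiffOn_infty_iff_fderiv_of_isOpen hΩ).mpr
      ⟨fun x hx => (hΦ x hx).differentiableAt.differentiableWithinAt,
        hω.congr fun x hx => (hΦ x hx).fderiv⟩, fun x hx k => ?_⟩
    simp [pd, (hΦ x hx).fderiv, covectorForm_apply, Pi.single_apply]

end CovectorField

theorem semi_metric_zeta_zero_iff_exact_general (Ω : Set E3) (hΩ : IsOpen Ω)
    (hsc : SimplyConnectedSpace Ω)
    (L : Conn) (hL : ConnSmooth L Ω) (g : Metric) (hg : MetricOn g Ω)
    (Qv : E3 → Fin 3 → ℝ) (hQv : ∀ k, ContDiffOn ℝ (⊤ : ℕ∞) (fun x => Qv x k) Ω)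
    (hsemi : ∀ x ∈ Ω, ∀ k i j : Fin 3, nm L g x k i j = Qv x k * g x i j) :
    (∀ x ∈ Ω, ∀ i j k l : Fin 3, lcurv L g x i j k l + lcurv L g x i j l k = 0)
      ↔ ∃ φ : E3 → ℝ, ContDiffOn ℝ (⊤ : ℕ∞) φ Ω ∧
          ∀ x ∈ Ω, ∀ k : Fin 3, Qv x k = pd φ k x := by
  obtain ⟨hgsm, hgsymm, hgpos⟩ := hg
  have hζ (x : E3) (hx : x ∈ Ω) (i j k l : Fin 3) :=
    lcurv_add_lcurv_swap_of_semiMetric hΩ hL hgsm hQv hsemi hx (hgsymm x hx) i j k l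
  rw [exists_pd_eq_iff_pd_comm hΩ hQv]
  constructor
  · intro hζ0 x hx i j
    have h := hζ x hx i j 0 0
    rw [hζ0 x hx i j 0 0, eq_comm, mul_eq_zero, sub_eq_zero] at h
    exact h.resolve_right (hgpos x hx).diag_pos.ne'
  · intro hclosed x hx i j k l
    rw [hζ x hx, hclosed x hx i j, sub_self, zero_mul]

/-- Semi-metric geometry with vanishing rotational disclinations: assuming
`θ = 0`, the symmetric part `ζ` of the lowered curvature vanishes identically
iff the Weyl covector is a gradient. -/
theorem semi_metric_zeta_zero_iff_exact (Ω : Set E3) (hΩ : IsOpen Ω) (hne : Ω.Nonempty)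
    (hconn : IsConnected Ω) (hsc : SimplyConnectedSpace Ω)
    (L : Conn) (hL : ConnSmooth L Ω) (g : Metric) (hg : MetricOn g Ω)
    (Qv : E3 → Fin 3 → ℝ) (hQv : ∀ k, ContDiffOn ℝ (⊤ : ℕ∞) (fun x => Qv x k) Ω)
    (hsemi : ∀ x ∈ Ω, ∀ k i j : Fin 3, nm L g x k i j = Qv x k * g x i j)
    (htheta : ∀ x ∈ Ω, ∀ i j k l : Fin 3, lcurv L g x i j k l = lcurv L g x i j l k) :
    (∀ x ∈ Ω, ∀ i j k l : Fin 3, lcurv L g x i j k l + lcurv L g x i j l k = 0)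
      ↔ ∃ φ : E3 → ℝ, ContDiffOn ℝ (⊤ : ℕ∞) φ Ω ∧
          ∀ x ∈ Ω, ∀ k : Fin 3, Qv x k = pd φ k x :=
  semi_metric_zeta_zero_iff_exact_general Ω hΩ hsc L hL g hg Qv hQv hsemi
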